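/- Let g be a finite-dimensional real Lie algebra and a : g → g a Lie algebra automorphism. Let g^s be the sum of the generalized eigenspaces of a corresponding to eigenvalues of modulus less than 1, and g^u the sum of those corresponding to eigenvalues of modulus greater than 1. Then the smallest Lie subalgebra h of g containing g^s and g^u is an ideal of g. -/

import Mathlib

open TensorProduct Module

/-! Since `a` preserves brackets, so does its complexification `A`, whence
`⁅E_λ, E_μ⁆ ⊆ E_{λμ}` for the generalized eigenspaces `E_μ` of `A`. Complex conjugation maps
`E_μ` onto `E_μ̄`, so taking real parts of the components of `1 ⊗ x` in
`E_{|μ|<1} ⊕ E_{|μ|=1} ⊕ E_{|μ|>1}` splits every `x : g` as `xs + xc + xu` with `xs ∈ gˢ`,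
`xu ∈ gᵘ` and `1 ⊗ xc ∈ E_{|μ|=1}`. Now `xs, xu ∈ h`, and the derivation `ad xc` maps `gˢ` and
`gᵘ` into themselves because multiplying by a unit-modulus eigenvalue preserves `|μ| < 1` and
`|μ| > 1`; hence it preserves the Lie algebra `h` they generate. -/

section GeneralizedEigenspace

variable {K L : Type*} [CommRing K] [LieRing L] [LieAlgebra K L] {f : Module.End K L}

theorem lie_mem_maxGenEigenspace_mul (hf : ∀ x y : L, f ⁅x, y⁆ = ⁅f x, f y⁆) {l m : K}
    {x y : L} (hx : x ∈ f.maxGenEigenspace l) (hy : y ∈ f.maxGenEigenspace m) :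
    ⁅x, y⁆ ∈ f.maxGenEigenspace (l * m) := by
  obtain ⟨p, hp⟩ := (Module.End.mem_maxGenEigenspace _ _ _).mp hx
  obtain ⟨q, hq⟩ := (Module.End.mem_maxGenEigenspace _ _ _).mp hy
  clear hx hy
  induction p generalizing x y q with
  | zero => simp_all
  | succ p ihp =>
    induction q generalizing y with
    | zero => simp_all
    | succ q ihq =>
      have hf_comm : Commute (f - m • 1) f :=
        (Commute.refl f).sub_left ((Commute.one_left f).smul_left m)
      have key : (f - (l * m) • 1) ⁅x, y⁆ = ⁅(f - l • 1) x, f y⁆ + l • ⁅x, (f - m • 1) y⁆ := by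
        simp only [LinearMap.sub_apply, LinearMap.smul_apply, Module.End.one_apply, hf,
          sub_lie, lie_sub, smul_sub, lie_smul, smul_lie, smul_smul]
        abel
      have h₁ : ⁅(f - l • 1) x, f y⁆ ∈ f.maxGenEigenspace (l * m) := by
        refine ihp (q := q + 1) ?_ ?_
        · rwa [← Module.End.mul_apply, ← pow_succ]
        · rw [← Module.End.mul_apply, (hf_comm.pow_left _).eq, Module.End.mul_apply, hq, map_zero]
      have h₂ : ⁅x, (f - m • 1) y⁆ ∈ f.maxGenEigenspace (l * m) :=
        ihq (by rwa [← Module.End.mul_apply, ← pow_succ])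
      obtain ⟨k, hk⟩ := (Module.End.mem_maxGenEigenspace _ _ _).mp
        (key ▸ add_mem h₁ (Submodule.smul_mem _ l h₂))
      exact (Module.End.mem_maxGenEigenspace _ _ _).mpr
        ⟨k + 1, by rw [pow_succ, Module.End.mul_apply, hk]⟩

theorem lie_mem_biSup_maxGenEigenspace (hf : ∀ x y : L, f ⁅x, y⁆ = ⁅f x, f y⁆) {S T U : Set K}
    (hSTU : ∀ l ∈ S, ∀ m ∈ T, l * m ∈ U) {x y : L}
    (hx : x ∈ ⨆ l ∈ S, f.maxGenEigenspace l) (hy : y ∈ ⨆ m ∈ T, f.maxGenEigenspace m) :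
    ⁅x, y⁆ ∈ ⨆ n ∈ U, f.maxGenEigenspace n := by
  rw [iSup_subtype'] at hx hy
  induction hx using Submodule.iSup_induction' with
  | mem l x hxl =>
    induction hy using Submodule.iSup_induction' with
    | mem m y hym =>
      exact le_biSup (f.maxGenEigenspace ·) (hSTU l l.2 m m.2)
        (lie_mem_maxGenEigenspace_mul hf hxl hym)
    | zero => simp
    | add y z _ _ hy hz => rw [lie_add]; exact add_mem hy hz
  | zero => simp
  | add x z _ _ hx hz => rw [add_lie]; exact add_mem hx hz

end GeneralizedEigenspace

theorem LieSubalgebra.lie_mem_lieSpan_of_forall_lie_mem {R L : Type*} [CommRing R] [LieRing L]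
    [LieAlgebra R L] {s : Set L} {z y : L} (hs : ∀ x ∈ s, ⁅z, x⁆ ∈ lieSpan R L s)
    (hy : y ∈ lieSpan R L s) :
    ⁅z, y⁆ ∈ lieSpan R L s := by
  induction hy using lieSpan_induction with
  | mem x hx => exact hs x hx
  | zero => simp
  | add x y _ _ hx hy => rw [lie_add]; exact add_mem hx hy
  | smul a x _ hx => rw [lie_smul]; exact SMulMemClass.smul_mem a hx
  | lie x y hx' hy' hx hy =>
    rw [leibniz_lie]; exact add_mem (lie_mem _ hx hy') (lie_mem _ hx' hy)

section Complexification

variable {V : Type*} [AddCommGroup V] [Module ℝ V]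

variable (V) in
noncomputable def conjTensor : ℂ ⊗[ℝ] V →ₗ⋆[ℂ] ℂ ⊗[ℝ] V where
  __ := Complex.conjAe.toLinearMap.rTensor V
  map_smul' c e := by
    induction e with
    | zero => simp
    | tmul d v => simp [smul_tmul']
    | add e e' he he' => simp_all

variable (V) in
noncomputable def reTensor : ℂ ⊗[ℝ] V →ₗ[ℝ] V :=
  TensorProduct.lid ℝ V ∘ₗ Complex.reLm.rTensor V

@[simp]
theorem conjTensor_tmul (c : ℂ) (v : V) : conjTensor V (c ⊗ₜ v) = starRingEnd ℂ c ⊗ₜ v := rfl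

@[simp]
theorem reTensor_tmul (c : ℂ) (v : V) : reTensor V (c ⊗ₜ v) = c.re • v := rfl

theorem one_tmul_reTensor (e : ℂ ⊗[ℝ] V) :
    (1 : ℂ) ⊗ₜ[ℝ] reTensor V e = (2⁻¹ : ℝ) • (e + conjTensor V e) := by
  induction e with
  | zero => simp
  | tmul c v =>
    have hre : c + starRingEnd ℂ c = (c.re * 2 : ℝ) • (1 : ℂ) := by
      rw [Complex.add_conj, Complex.real_smul, mul_one]; push_cast; ring
    rw [reTensor_tmul, conjTensor_tmul, ← add_tmul, ← tmul_smul, hre, smul_tmul, smul_smul,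
      mul_inv_cancel_right₀ (two_ne_zero : (2 : ℝ) ≠ 0)]
  | add e e' he he' => simp_all [tmul_add, smul_add, add_add_add_comm]

theorem conjTensor_baseChange (f : Module.End ℝ V) (e : ℂ ⊗[ℝ] V) :
    conjTensor V (f.baseChange ℂ e) = f.baseChange ℂ (conjTensor V e) := by
  induction e with
  | zero => simp
  | tmul c v => simp
  | add e e' he he' => simp_all

theorem conjTensor_mem_maxGenEigenspace {f : Module.End ℝ V} {μ : ℂ} {e : ℂ ⊗[ℝ] V}
    (he : e ∈ Module.End.maxGenEigenspace (f.baseChange ℂ) μ) :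
    conjTensor V e ∈ Module.End.maxGenEigenspace (f.baseChange ℂ) (starRingEnd ℂ μ) := by
  have hcomm : (f.baseChange ℂ - starRingEnd ℂ μ • 1).comp (conjTensor V) =
      (conjTensor V).comp (f.baseChange ℂ - μ • 1) := by
    ext e
    simp [conjTensor_baseChange]
  obtain ⟨k, hk⟩ := (Module.End.mem_maxGenEigenspace _ _ _).mp he
  refine (Module.End.mem_maxGenEigenspace _ _ _).mpr ⟨k, ?_⟩
  rw [← LinearMap.comp_apply, Module.End.commute_pow_left_of_commute hcomm, LinearMap.comp_apply,
    hk, map_zero]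

theorem conjTensor_mem_biSup_maxGenEigenspace {f : Module.End ℝ V} {S : Set ℂ}
    (hS : ∀ μ ∈ S, starRingEnd ℂ μ ∈ S) {e : ℂ ⊗[ℝ] V}
    (he : e ∈ ⨆ μ ∈ S, Module.End.maxGenEigenspace (f.baseChange ℂ) μ) :
    conjTensor V e ∈ ⨆ μ ∈ S, Module.End.maxGenEigenspace (f.baseChange ℂ) μ := by
  rw [iSup_subtype'] at he
  induction he using Submodule.iSup_induction' with
  | mem μ e hμ =>
    exact le_biSup (Module.End.maxGenEigenspace (f.baseChange ℂ) ·) (hS μ μ.2)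
      (conjTensor_mem_maxGenEigenspace hμ)
  | zero => simp
  | add e e' _ _ he he' => rw [map_add]; exact add_mem he he'

theorem one_tmul_reTensor_mem {P : Submodule ℂ (ℂ ⊗[ℝ] V)} (hP : ∀ e ∈ P, conjTensor V e ∈ P)
    {e : ℂ ⊗[ℝ] V} (he : e ∈ P) : (1 : ℂ) ⊗ₜ[ℝ] reTensor V e ∈ P := by
  rw [one_tmul_reTensor]
  exact Submodule.smul_of_tower_mem _ _ (add_mem he (hP e he))

end Complexification

section RealMaxGenEigenspace

variable {V : Type*} [AddCommGroup V] [Module ℝ V]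

noncomputable def realMaxGenEigenspace (f : Module.End ℝ V) (S : Set ℂ) : Submodule ℝ V :=
  ((⨆ μ ∈ S, Module.End.maxGenEigenspace (f.baseChange ℂ) μ).restrictScalars ℝ).comap
    (TensorProduct.mk ℝ ℂ V 1)

theorem mem_realMaxGenEigenspace {f : Module.End ℝ V} {S : Set ℂ} {v : V} :
    v ∈ realMaxGenEigenspace f S ↔
      (1 : ℂ) ⊗ₜ[ℝ] v ∈ ⨆ μ ∈ S, Module.End.maxGenEigenspace (f.baseChange ℂ) μ :=
  Iff.rfl

theorem realMaxGenEigenspace_mono (f : Module.End ℝ V) {S T : Set ℂ} (hST : S ⊆ T) :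
    realMaxGenEigenspace f S ≤ realMaxGenEigenspace f T :=
  fun _ hv ↦ SetLike.le_def.mp
    (biSup_mono hST : ⨆ μ ∈ S, Module.End.maxGenEigenspace (f.baseChange ℂ) μ ≤ _) hv

theorem realMaxGenEigenspace_union (f : Module.End ℝ V) {S T : Set ℂ}
    (hS : ∀ μ ∈ S, starRingEnd ℂ μ ∈ S) (hT : ∀ μ ∈ T, starRingEnd ℂ μ ∈ T) :
    realMaxGenEigenspace f (S ∪ T) = realMaxGenEigenspace f S ⊔ realMaxGenEigenspace f T := by
  refine le_antisymm (fun v hv ↦ ?_) (sup_le (realMaxGenEigenspace_mono f Set.subset_union_left)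
    (realMaxGenEigenspace_mono f Set.subset_union_right))
  rw [mem_realMaxGenEigenspace, iSup_union] at hv
  obtain ⟨p, hp, q, hq, hpq⟩ := Submodule.mem_sup.mp hv
  have hv : v = reTensor V p + reTensor V q := by
    rw [← map_add, hpq, reTensor_tmul, Complex.one_re, one_smul]
  exact hv ▸ Submodule.add_mem_sup
    (one_tmul_reTensor_mem (fun _ ↦ conjTensor_mem_biSup_maxGenEigenspace hS) hp)
    (one_tmul_reTensor_mem (fun _ ↦ conjTensor_mem_biSup_maxGenEigenspace hT) hq)

theorem realMaxGenEigenspace_univ [FiniteDimensional ℝ V] (f : Module.End ℝ V) :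
    realMaxGenEigenspace f Set.univ = ⊤ := by
  refine eq_top_iff.mpr fun v _ ↦ ?_
  rw [mem_realMaxGenEigenspace, iSup_univ, Module.End.iSup_maxGenEigenspace_eq_top]
  exact Submodule.mem_top

theorem realMaxGenEigenspace_norm_trichotomy_eq_top [FiniteDimensional ℝ V] (f : Module.End ℝ V) :
    realMaxGenEigenspace f {μ | ‖μ‖ < 1} ⊔ realMaxGenEigenspace f {μ | ‖μ‖ = 1} ⊔
      realMaxGenEigenspace f {μ | 1 < ‖μ‖} = ⊤ := by
  have hcover : {μ : ℂ | ‖μ‖ < 1 ∨ ‖μ‖ = 1} ∪ {μ | 1 < ‖μ‖} = Set.univ := by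
    ext μ
    simpa [or_assoc] using lt_trichotomy ‖μ‖ 1
  rw [← realMaxGenEigenspace_univ f, ← hcover, realMaxGenEigenspace_union f (by simp) (by simp),
    Set.ofPred_or, realMaxGenEigenspace_union f (by simp) (by simp)]

end RealMaxGenEigenspace

theorem lie_mem_realMaxGenEigenspace {g : Type*} [LieRing g] [LieAlgebra ℝ g] (f : g →ₗ⁅ℝ⁆ g)
    {S T U : Set ℂ} (hSTU : ∀ l ∈ S, ∀ m ∈ T, l * m ∈ U) {x y : g}
    (hx : x ∈ realMaxGenEigenspace (f : Module.End ℝ g) S)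
    (hy : y ∈ realMaxGenEigenspace (f : Module.End ℝ g) T) :
    ⁅x, y⁆ ∈ realMaxGenEigenspace (f : Module.End ℝ g) U := by
  have hf (e e' : ℂ ⊗[ℝ] g) : (f : Module.End ℝ g).baseChange ℂ ⁅e, e'⁆ =
      ⁅(f : Module.End ℝ g).baseChange ℂ e, (f : Module.End ℝ g).baseChange ℂ e'⁆ :=
    (LieAlgebra.ExtendScalars.map (AlgHom.id ℝ ℂ) f).map_lie e e'
  simpa [mem_realMaxGenEigenspace] using lie_mem_biSup_maxGenEigenspace hf hSTU hx hy

/-- Let `g` be a finite-dimensional real Lie algebra and `a` an automorphism. With `gˢ`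
(resp. `gᵘ`) the set of vectors lying (after complexification) in the sum of generalized
eigenspaces for eigenvalues of modulus `< 1` (resp. `> 1`), the smallest Lie subalgebra `h`
containing `gˢ ∪ gᵘ` is an ideal of `g`. -/
theorem hyperbolic_subalgebra_is_ideal
    {g : Type*} [LieRing g] [LieAlgebra ℝ g] [FiniteDimensional ℝ g]
    (a : g ≃ₗ⁅ℝ⁆ g) :
    ∀ A : Module.End ℂ (ℂ ⊗[ℝ] g),
      A = LinearMap.baseChange ℂ (a.toLinearEquiv : g →ₗ[ℝ] g) →
    ∀ gs gu : Set g,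
      gs = {v : g | (1 : ℂ) ⊗ₜ[ℝ] v ∈ ⨆ μ ∈ {μ : ℂ | ‖μ‖ < 1}, A.maxGenEigenspace μ} →
      gu = {v : g | (1 : ℂ) ⊗ₜ[ℝ] v ∈ ⨆ μ ∈ {μ : ℂ | 1 < ‖μ‖}, A.maxGenEigenspace μ} →
    ∀ h : LieSubalgebra ℝ g, h = LieSubalgebra.lieSpan ℝ g (gs ∪ gu) →
    ∀ x : g, ∀ y ∈ h, ⁅x, y⁆ ∈ h := by
  rintro A rfl gs gu hgs hgu h rfl x y hy
  replace hgs : gs = realMaxGenEigenspace (a.toLieHom : Module.End ℝ g) {μ | ‖μ‖ < 1} := hgs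
  replace hgu : gu = realMaxGenEigenspace (a.toLieHom : Module.End ℝ g) {μ | 1 < ‖μ‖} := hgu
  obtain ⟨x', hx', xu, hxu, rfl⟩ := Submodule.mem_sup.mp
    ((realMaxGenEigenspace_norm_trichotomy_eq_top (a.toLieHom : Module.End ℝ g)).symm ▸
      Submodule.mem_top : x ∈ _)
  obtain ⟨xs, hxs, xc, hxc, rfl⟩ := Submodule.mem_sup.mp hx'
  have hxc_lie : ∀ v ∈ gs ∪ gu, ⁅xc, v⁆ ∈ gs ∪ gu := by
    subst hgs hgu
    rintro v (hv | hv)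
    · exact .inl (lie_mem_realMaxGenEigenspace a.toLieHom
        (fun l hl m hm ↦ by simp_all) hxc hv)
    · exact .inr (lie_mem_realMaxGenEigenspace a.toLieHom
        (fun l hl m hm ↦ by simp_all) hxc hv)
  rw [add_lie, add_lie]
  refine add_mem (add_mem ?_ ?_) ?_
  · exact LieSubalgebra.lie_mem _ (LieSubalgebra.subset_lieSpan (.inl (hgs ▸ hxs))) hy
  · exact LieSubalgebra.lie_mem_lieSpan_of_forall_lie_mem
      (fun v hv ↦ LieSubalgebra.subset_lieSpan (hxc_lie v hv)) hy
  · exact LieSubalgebra.lie_mem _ (LieSubalgebra.subset_lieSpan (.inr (hgu ▸ hxu))) hy
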